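/- arXiv:2507.23586 — 8 statements merged into one kernel-verified Lean document; each statement's English description precedes it below -/
import Mathlib

section
/- Let Q and V be finite-dimensional real inner product spaces, d₋ : Q → V a linear map, and α > 0. Then the operator S = α·id_Q + (1+α)·(d₋† ∘ d₋) on Q is symmetric positive definite (hence invertible), and for every q ∈ Q it holds that ⟨S⁻¹(d₋†(d₋ q)), d₋†(d₋ q)⟩ ≤ (1+α)⁻¹ · ‖d₋ q‖². -/
open scoped RealInnerProductSpace

/-- The operator `S = α·id + (1+α)·(d₋† ∘ d₋)` is symmetric positive definite (hence
invertible) for `α > 0`, and `⟪S⁻¹(d₋†(d₋ q)), d₋†(d₋ q)⟫ ≤ (1+α)⁻¹ ‖d₋ q‖²` for all `q`. -/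
theorem S_spd_and_key_estimate
    {Q V : Type*}
    [NormedAddCommGroup Q] [InnerProductSpace ℝ Q] [FiniteDimensional ℝ Q]
    [NormedAddCommGroup V] [InnerProductSpace ℝ V] [FiniteDimensional ℝ V]
    (dm : Q →ₗ[ℝ] V) (α : ℝ) (hα : 0 < α)
    (S : Q →ₗ[ℝ] Q)
    (hS : S = α • (LinearMap.id : Q →ₗ[ℝ] Q) + (1 + α) • ((LinearMap.adjoint dm) ∘ₗ dm)) :
    (∀ p q : Q, ⟪S p, q⟫ = ⟪p, S q⟫) ∧
    (∀ q : Q, q ≠ 0 → 0 < ⟪S q, q⟫) ∧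
    Function.Bijective S ∧
    (∀ q r : Q, S r = LinearMap.adjoint dm (dm q) →
      ⟪r, LinearMap.adjoint dm (dm q)⟫ ≤ (1 + α)⁻¹ * ‖dm q‖ ^ 2) := by
  have hα1 : (0:ℝ) < 1 + α := by linarith
  have hSapp : ∀ p : Q, S p = α • p + (1 + α) • (LinearMap.adjoint dm) (dm p) := by
    intro p; simp [hS]
  have hsym : ∀ p q : Q, ⟪S p, q⟫ = ⟪p, S q⟫ := by
    intro p q
    simp only [hSapp, inner_add_left, inner_add_right, real_inner_smul_left,
      real_inner_smul_right, LinearMap.adjoint_inner_left, LinearMap.adjoint_inner_right]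
  have hquad : ∀ q : Q, ⟪S q, q⟫ = α * ‖q‖ ^ 2 + (1 + α) * ‖dm q‖ ^ 2 := by
    intro q
    simp only [hSapp, inner_add_left, real_inner_smul_left, LinearMap.adjoint_inner_left,
      real_inner_self_eq_norm_sq]
  have hpos : ∀ q : Q, q ≠ 0 → 0 < ⟪S q, q⟫ := by
    intro q hq
    rw [hquad]
    have h1 : 0 < ‖q‖ ^ 2 := by have := norm_pos_iff.mpr hq; positivity
    have h2 : (0:ℝ) ≤ ‖dm q‖ ^ 2 := by positivity
    nlinarith
  have hinj : Function.Injective S := by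
    rw [← LinearMap.ker_eq_bot, LinearMap.ker_eq_bot']
    intro q hq
    by_contra h
    have := hpos q h
    rw [hq] at this
    simp at this
  refine ⟨hsym, hpos, ⟨hinj, LinearMap.surjective_of_injective hinj⟩, ?_⟩
  intro q r hr
  have key : α * ‖r‖ ^ 2 + (1 + α) * ‖dm r‖ ^ 2 = ⟪dm r, dm q⟫ := by
    rw [← hquad, hr, LinearMap.adjoint_inner_left, real_inner_comm]
  have hcs : ⟪dm r, dm q⟫ ≤ ‖dm r‖ * ‖dm q‖ := real_inner_le_norm _ _
  have hbound : ‖dm r‖ ≤ (1 + α)⁻¹ * ‖dm q‖ := by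
    rcases eq_or_ne (dm r) 0 with h0 | h0
    · simp [h0]; positivity
    · have hnr : 0 < ‖dm r‖ := norm_pos_iff.mpr h0
      have h1 : (1 + α) * ‖dm r‖ ^ 2 ≤ ‖dm r‖ * ‖dm q‖ := by nlinarith [sq_nonneg ‖r‖]
      rw [le_inv_mul_iff₀ hα1]
      nlinarith
  have : ⟪r, LinearMap.adjoint dm (dm q)⟫ = ⟪dm r, dm q⟫ := by
    rw [LinearMap.adjoint_inner_right]
  rw [this]
  calc ⟪dm r, dm q⟫ ≤ ‖dm r‖ * ‖dm q‖ := hcs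
    _ ≤ ((1 + α)⁻¹ * ‖dm q‖) * ‖dm q‖ := by
        apply mul_le_mul_of_nonneg_right hbound (norm_nonneg _)
    _ = (1 + α)⁻¹ * ‖dm q‖ ^ 2 := by ring
end

section
/- Let Q, V, W be finite-dimensional real inner product spaces, d₋ : Q → V and d : V → W linear maps with d ∘ d₋ = 0, and α > 0. Define S = α·id_Q + (1+α)·(d₋† ∘ d₋) and the fitted norm ‖v‖_V² = ‖d v‖² + ⟨S⁻¹(d₋† v), d₋† v⟩ on V. Then for every q ∈ Q with d₋ q ≠ 0 there exists v ∈ V with v ≠ 0 such that ⟨v, d₋ q⟩ ≥ √(1+α) · ‖d₋ q‖ · ‖v‖_V; that is, the bilinear form b(v,q) = ⟨v, d₋ q⟩ satisfies the inf-sup condition sup_{v≠0} b(v,q)/‖v‖_V ≥ |q|_Q with |q|_Q = √(1+α)·‖d₋ q‖ and inf-sup constant at least 1, uniformly in α. -/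
open scoped RealInnerProductSpace

/-- The fitting operator `S = α·id_Q + (1+α)·(d₋† ∘ d₋)`. -/
noncomputable def fittingOp {Q V : Type*}
    [NormedAddCommGroup Q] [InnerProductSpace ℝ Q] [FiniteDimensional ℝ Q]
    [NormedAddCommGroup V] [InnerProductSpace ℝ V] [FiniteDimensional ℝ V]
    (dm : Q →ₗ[ℝ] V) (α : ℝ) : Q →ₗ[ℝ] Q :=
  α • (LinearMap.id : Q →ₗ[ℝ] Q) + (1 + α) • ((LinearMap.adjoint dm) ∘ₗ dm)

/-- The square of the fitted `V`-norm, `‖v‖_V² = ‖d v‖² + ⟪S⁻¹(d₋† v), d₋† v⟫`.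
(For `α > 0` the operator `S` is bijective, so `Function.invFun` is its genuine inverse.) -/
noncomputable def fittedVnormSq {Q V W : Type*}
    [NormedAddCommGroup Q] [InnerProductSpace ℝ Q] [FiniteDimensional ℝ Q]
    [NormedAddCommGroup V] [InnerProductSpace ℝ V] [FiniteDimensional ℝ V]
    [NormedAddCommGroup W] [InnerProductSpace ℝ W] [FiniteDimensional ℝ W]
    (dm : Q →ₗ[ℝ] V) (d : V →ₗ[ℝ] W) (α : ℝ) (v : V) : ℝ :=
  ‖d v‖ ^ 2 +
    ⟪Function.invFun (fittingOp dm α) (LinearMap.adjoint dm v), LinearMap.adjoint dm v⟫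

/-- **Inf-sup stability of `b(v,q) = ⟪v, d₋ q⟫` in the fitted norms, uniformly in `α`.**
For every `q` with `d₋ q ≠ 0` there is `v ≠ 0` with
`⟪v, d₋ q⟫ ≥ √(1+α) · ‖d₋ q‖ · ‖v‖_V`, i.e. the inf-sup constant is at least `1` for the
`Q`-seminorm `|q|_Q = √(1+α)·‖d₋ q‖`. -/
theorem b_infsup_fitted_norms
    {Q V W : Type*}
    [NormedAddCommGroup Q] [InnerProductSpace ℝ Q] [FiniteDimensional ℝ Q]
    [NormedAddCommGroup V] [InnerProductSpace ℝ V] [FiniteDimensional ℝ V]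
    [NormedAddCommGroup W] [InnerProductSpace ℝ W] [FiniteDimensional ℝ W]
    (dm : Q →ₗ[ℝ] V) (d : V →ₗ[ℝ] W)
    (hcomplex : d ∘ₗ dm = 0)
    (α : ℝ) (hα : 0 < α) :
    ∀ q : Q, dm q ≠ 0 → ∃ v : V, v ≠ 0 ∧
      ⟪v, dm q⟫ ≥ Real.sqrt (1 + α) * ‖dm q‖ * Real.sqrt (fittedVnormSq dm d α v) := by
  intro q hq
  have hSinner : ∀ x : Q, ⟪fittingOp dm α x, x⟫ = α * ‖x‖^2 + (1+α) * ‖dm x‖^2 := by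
    intro x
    simp only [fittingOp, LinearMap.add_apply, LinearMap.smul_apply, LinearMap.id_apply,
      LinearMap.comp_apply]
    rw [inner_add_left, real_inner_smul_left, real_inner_smul_left,
      LinearMap.adjoint_inner_left, real_inner_self_eq_norm_sq, real_inner_self_eq_norm_sq]
  have hinj : Function.Injective (fittingOp dm α) := by
    rw [← LinearMap.ker_eq_bot, LinearMap.ker_eq_bot']
    intro x hx
    by_contra hx0
    have h1 : ⟪fittingOp dm α x, x⟫ = 0 := by rw [hx]; simp
    rw [hSinner x] at h1
    have hxp : 0 < ‖x‖ := norm_pos_iff.mpr hx0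
    nlinarith [sq_nonneg ‖dm x‖, mul_pos hα (pow_pos hxp 2)]
  have hsurj : Function.Surjective (fittingOp dm α) :=
    (LinearMap.injective_iff_surjective).mp hinj
  refine ⟨dm q, hq, ?_⟩
  set u := Function.invFun (fittingOp dm α) (LinearMap.adjoint dm (dm q)) with hu
  have hSu : fittingOp dm α u = LinearMap.adjoint dm (dm q) :=
    Function.invFun_eq (hsurj _)
  have hdv : d (dm q) = 0 := by
    have := LinearMap.congr_fun hcomplex q
    simpa using this
  have hIval : fittedVnormSq dm d α (dm q) = ⟪u, LinearMap.adjoint dm (dm q)⟫ := by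
    simp only [fittedVnormSq, hdv, norm_zero, ← hu]
    ring
  set I := ⟪u, LinearMap.adjoint dm (dm q)⟫ with hI
  have hI1 : I = α * ‖u‖^2 + (1+α) * ‖dm u‖^2 := by
    rw [hI, ← hSu, real_inner_comm, hSinner]
  have hI2 : I ≤ ‖dm u‖ * ‖dm q‖ := by
    rw [hI, LinearMap.adjoint_inner_right]
    exact real_inner_le_norm _ _
  have hkey : (1+α) * I ≤ ‖dm q‖^2 := by
    nlinarith [sq_nonneg (‖dm q‖ - (1+α) * ‖dm u‖), norm_nonneg (dm u), norm_nonneg (dm q),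
      sq_nonneg ‖u‖, mul_pos hα hα]
  have hs : 0 ≤ ‖dm q‖ := norm_nonneg _
  have h3 : Real.sqrt (1+α) * Real.sqrt I ≤ ‖dm q‖ := by
    rw [← Real.sqrt_mul (by linarith)]
    calc Real.sqrt ((1+α)*I) ≤ Real.sqrt (‖dm q‖^2) := Real.sqrt_le_sqrt hkey
      _ = ‖dm q‖ := Real.sqrt_sq hs
  rw [ge_iff_le, hIval, real_inner_self_eq_norm_sq]
  calc Real.sqrt (1+α) * ‖dm q‖ * Real.sqrt I
      = ‖dm q‖ * (Real.sqrt (1+α) * Real.sqrt I) := by ring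
    _ ≤ ‖dm q‖ * ‖dm q‖ := mul_le_mul_of_nonneg_left h3 hs
    _ = ‖dm q‖^2 := by ring
end

section
/- Let Q, V, W be finite-dimensional real inner product spaces, d₋ : Q → V and d : V → W linear maps with d ∘ d₋ = 0 and range d₋ = ker d (exactness at V), and α > 0. Define S = α·id_Q + (1+α)·(d₋† ∘ d₋) and ‖v‖_V² = ‖d v‖² + ⟨S⁻¹(d₋† v), d₋† v⟩. Then for every v ∈ V: ‖v‖_V² ≤ ‖d v‖² + (1+α)⁻¹ · ‖v‖². -/
open scoped RealInnerProductSpace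

lemma fittingOp_inner {Q V : Type*}
    [NormedAddCommGroup Q] [InnerProductSpace ℝ Q] [FiniteDimensional ℝ Q]
    [NormedAddCommGroup V] [InnerProductSpace ℝ V] [FiniteDimensional ℝ V]
    (dm : Q →ₗ[ℝ] V) (α : ℝ) (q : Q) :
    ⟪q, fittingOp dm α q⟫ = α * ‖q‖ ^ 2 + (1 + α) * ‖dm q‖ ^ 2 := by
  simp only [fittingOp, LinearMap.add_apply, LinearMap.smul_apply, LinearMap.id_apply,
    LinearMap.comp_apply, inner_add_right, real_inner_smul_right]
  rw [LinearMap.adjoint_inner_right, real_inner_self_eq_norm_sq, real_inner_self_eq_norm_sq]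

lemma fittingOp_injective {Q V : Type*}
    [NormedAddCommGroup Q] [InnerProductSpace ℝ Q] [FiniteDimensional ℝ Q]
    [NormedAddCommGroup V] [InnerProductSpace ℝ V] [FiniteDimensional ℝ V]
    (dm : Q →ₗ[ℝ] V) (α : ℝ) (hα : 0 < α) :
    Function.Injective (fittingOp dm α) := by
  rw [← LinearMap.ker_eq_bot, LinearMap.ker_eq_bot']
  intro q hq
  have h := fittingOp_inner dm α q
  rw [hq, inner_zero_right] at h
  have h1 : (0:ℝ) ≤ (1 + α) * ‖dm q‖ ^ 2 := by positivity
  have h2 : α * ‖q‖ ^ 2 ≤ 0 := by linarith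
  have h3 : ‖q‖ = 0 := by
    by_contra hz
    have hpos : 0 < ‖q‖ := lt_of_le_of_ne (norm_nonneg q) (Ne.symm hz)
    nlinarith [mul_pos hα (pow_pos hpos 2)]
  simpa using h3

/-- **Upper bound for the fitted `V`-norm:** for an exact complex and `α > 0`,
`‖v‖_V² ≤ ‖d v‖² + (1+α)⁻¹ ‖v‖²` for all `v ∈ V`. -/
theorem fittedVnormSq_le
    {Q V W : Type*}
    [NormedAddCommGroup Q] [InnerProductSpace ℝ Q] [FiniteDimensional ℝ Q]
    [NormedAddCommGroup V] [InnerProductSpace ℝ V] [FiniteDimensional ℝ V]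
    [NormedAddCommGroup W] [InnerProductSpace ℝ W] [FiniteDimensional ℝ W]
    (dm : Q →ₗ[ℝ] V) (d : V →ₗ[ℝ] W)
    (hcomplex : d ∘ₗ dm = 0)
    (hexact : LinearMap.range dm = LinearMap.ker d)
    (α : ℝ) (hα : 0 < α) :
    ∀ v : V, fittedVnormSq dm d α v ≤ ‖d v‖ ^ 2 + (1 + α)⁻¹ * ‖v‖ ^ 2 := by
  intro v
  have hinj := fittingOp_injective dm α hα
  have hsurj : Function.Surjective (fittingOp dm α) :=
    (LinearMap.injective_iff_surjective).mp hinj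
  set u := LinearMap.adjoint dm v with hu
  set q := Function.invFun (fittingOp dm α) u with hqdef
  have hSq : fittingOp dm α q = u := Function.invFun_eq (hsurj u)
  have key : ⟪q, u⟫ = α * ‖q‖ ^ 2 + (1 + α) * ‖dm q‖ ^ 2 := by
    rw [← hSq, fittingOp_inner]
  have hqu : ⟪q, u⟫ = ⟪dm q, v⟫ := by
    rw [hu, LinearMap.adjoint_inner_right]
  have h1α : (0:ℝ) < 1 + α := by linarith
  have hbound : ⟪q, u⟫ ≤ (1 + α)⁻¹ * ‖v‖ ^ 2 := by
    have hle : (1 + α) * ‖dm q‖ ^ 2 ≤ ⟪q, u⟫ := by nlinarith [sq_nonneg ‖q‖]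
    have hcs : ⟪dm q, v⟫ ≤ ‖dm q‖ * ‖v‖ := real_inner_le_norm _ _
    have hdm : ‖dm q‖ ≤ (1 + α)⁻¹ * ‖v‖ := by
      rcases eq_or_lt_of_le (norm_nonneg (dm q)) with h0 | h0
      · rw [← h0]; positivity
      · have : (1 + α) * ‖dm q‖ ^ 2 ≤ ‖dm q‖ * ‖v‖ := by
          calc (1 + α) * ‖dm q‖ ^ 2 ≤ ⟪q, u⟫ := hle
          _ = ⟪dm q, v⟫ := hqu
          _ ≤ ‖dm q‖ * ‖v‖ := hcs
        rw [inv_mul_eq_div, le_div_iff₀ h1α]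
        nlinarith
    calc ⟪q, u⟫ = ⟪dm q, v⟫ := hqu
    _ ≤ ‖dm q‖ * ‖v‖ := hcs
    _ ≤ ((1 + α)⁻¹ * ‖v‖) * ‖v‖ := by
        apply mul_le_mul_of_nonneg_right hdm (norm_nonneg v)
    _ = (1 + α)⁻¹ * ‖v‖ ^ 2 := by ring
  unfold fittedVnormSq
  rw [← hu, ← hqdef]
  linarith
end

section
/- Let Q₋, Q, V, W be finite-dimensional real inner product spaces and d₋₋ : Q₋ → Q, d₋ : Q → V, d : V → W linear maps with d₋ ∘ d₋₋ = 0, d ∘ d₋ = 0 and range d₋ = ker d (exactness at V). Suppose the Poincaré inequalities hold with constants c^P_{k−1}, c^P_k > 0: ‖q‖² ≤ c^P_{k−1}·‖d₋ q‖² for all q ∈ Q with d₋₋† q = 0, and ‖u‖² ≤ c^P_k·‖d u‖² for all u ∈ V with d₋† u = 0. For α > 0 set S = α·id_Q + (1+α)·(d₋† ∘ d₋) and ‖v‖_V² = ‖d v‖² + ⟨S⁻¹(d₋† v), d₋† v⟩. Then for every v ∈ V: (1+α)⁻¹‖v‖² + ‖d v‖² ≤ c₁ · ‖v‖_V², where c₁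 = 1 + max{c^P_k, c^P_{k−1}}. Together with the reverse inequality ‖v‖_V² ≤ ‖dv‖² + (1+α)⁻¹‖v‖², the fitted V-norm is equivalent, uniformly in α, to the norm given by (1+α)⁻¹‖v‖² + ‖dv‖². -/
open scoped RealInnerProductSpace

set_option maxHeartbeats 4000000

/-- **Equivalence of the fitted `V`-norm with the weighted norm
`(1+α)⁻¹‖v‖² + ‖d v‖²`, uniformly in `α`:** the lower bound holds with constant
`c₁ = 1 + max{c^P_k, c^P_{k-1}}` and the upper bound with constant `1`. -/
theorem fittedVnorm_equivalence
    {Qm Q V W : Type*}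
    [NormedAddCommGroup Qm] [InnerProductSpace ℝ Qm] [FiniteDimensional ℝ Qm]
    [NormedAddCommGroup Q] [InnerProductSpace ℝ Q] [FiniteDimensional ℝ Q]
    [NormedAddCommGroup V] [InnerProductSpace ℝ V] [FiniteDimensional ℝ V]
    [NormedAddCommGroup W] [InnerProductSpace ℝ W] [FiniteDimensional ℝ W]
    (dmm : Qm →ₗ[ℝ] Q) (dm : Q →ₗ[ℝ] V) (d : V →ₗ[ℝ] W)
    (hcomplex₁ : dm ∘ₗ dmm = 0) (hcomplex₂ : d ∘ₗ dm = 0)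
    (hexact : LinearMap.range dm = LinearMap.ker d)
    (cPkm : ℝ) (hcPkm : 0 < cPkm)
    (hPoincareQ : ∀ q : Q, LinearMap.adjoint dmm q = 0 → ‖q‖ ^ 2 ≤ cPkm * ‖dm q‖ ^ 2)
    (cPk : ℝ) (hcPk : 0 < cPk)
    (hPoincareV : ∀ u : V, LinearMap.adjoint dm u = 0 → ‖u‖ ^ 2 ≤ cPk * ‖d u‖ ^ 2)
    (α : ℝ) (hα : 0 < α) :
    ∀ v : V,
      (1 + α)⁻¹ * ‖v‖ ^ 2 + ‖d v‖ ^ 2 ≤ (1 + max cPk cPkm) * fittedVnormSq dm d α v ∧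
      fittedVnormSq dm d α v ≤ ‖d v‖ ^ 2 + (1 + α)⁻¹ * ‖v‖ ^ 2 := by
  intro v
  set S := fittingOp dm α with hS
  clear_value S
  have hSqq : ∀ q : Q, ⟪S q, q⟫ = α * ‖q‖ ^ 2 + (1 + α) * ‖dm q‖ ^ 2 := by
    intro q
    rw [show (⟪S q, q⟫:ℝ) = α * ⟪q, q⟫ + (1 + α) * ⟪dm q, dm q⟫ by
      simp [hS, fittingOp, inner_add_left, real_inner_smul_left, LinearMap.adjoint_inner_left],
      real_inner_self_eq_norm_sq, real_inner_self_eq_norm_sq]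
  have hSsym : ∀ x y : Q, ⟪S x, y⟫ = ⟪x, S y⟫ := by
    intro x y
    rw [show (⟪S x, y⟫:ℝ) = α * ⟪x, y⟫ + (1 + α) * ⟪dm x, dm y⟫ by
      simp [hS, fittingOp, inner_add_left, real_inner_smul_left, LinearMap.adjoint_inner_left],
      show (⟪x, S y⟫:ℝ) = α * ⟪x, y⟫ + (1 + α) * ⟪dm x, dm y⟫ by
      simp [hS, fittingOp, inner_add_right, real_inner_smul_right, LinearMap.adjoint_inner_right]]
  have hSinj : Function.Injective S := by
    rw [← LinearMap.ker_eq_bot, LinearMap.ker_eq_bot']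
    intro q hq
    have h1 : ⟪S q, q⟫ = 0 := by rw [hq]; simp
    rw [hSqq] at h1
    have hq2 : ‖q‖ ^ 2 = 0 := by nlinarith [sq_nonneg ‖q‖, sq_nonneg ‖dm q‖]
    simpa using sq_eq_zero_iff.mp hq2
  have hSsurj : Function.Surjective S := (LinearMap.injective_iff_surjective).mp hSinj
  obtain ⟨r, hrS⟩ : ∃ r, S r = LinearMap.adjoint dm v := hSsurj _
  have hinvr : Function.invFun S (LinearMap.adjoint dm v) = r :=
    hSinj (by rw [Function.invFun_eq (hSsurj _), hrS])
  set N := (⟪r, LinearMap.adjoint dm v⟫ : ℝ) with hN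
  have hNval : N = α * ‖r‖ ^ 2 + (1 + α) * ‖dm r‖ ^ 2 := by
    rw [hN, ← hrS, real_inner_comm, hSqq]
  have hNdmr : ⟪dm r, v⟫ = N := by
    rw [hN, LinearMap.adjoint_inner_right]
  have hSrr : (⟪S r, r⟫ : ℝ) = N := by rw [hrS, real_inner_comm, ← hN]
  have hNeq : (⟪r, LinearMap.adjoint dm v⟫ : ℝ) = N := hN.symm
  clear_value N
  clear hN
  have hNnonneg : 0 ≤ N := by nlinarith [sq_nonneg ‖r‖, sq_nonneg ‖dm r‖]
  -- upper bound
  have hupper : N ≤ (1 + α)⁻¹ * ‖v‖ ^ 2 := by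
    rcases eq_or_lt_of_le hNnonneg with h0 | h0
    · rw [← h0]; positivity
    · have hcs : ⟪dm r, v⟫ ≤ ‖dm r‖ * ‖v‖ := real_inner_le_norm _ _
      have h1 : (1 + α) * ‖dm r‖ ^ 2 ≤ N := by nlinarith [sq_nonneg ‖r‖]
      have h2 : N ^ 2 ≤ ‖dm r‖ ^ 2 * ‖v‖ ^ 2 := by
        nlinarith [norm_nonneg (dm r), norm_nonneg v, hNdmr]
      have h3 : N * ((1 + α) * N) ≤ N * ‖v‖ ^ 2 := by nlinarith [sq_nonneg ‖v‖]
      have h4 : (1 + α) * N ≤ ‖v‖ ^ 2 := le_of_mul_le_mul_left h3 h0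
      rw [inv_mul_eq_div, le_div_iff₀ (by linarith)]
      linarith
  -- decomposition v = w + u
  set R : Submodule ℝ V := LinearMap.range dm with hRdef
  set w : V := (R.orthogonalProjectionOnto v : V) with hw
  have hwR : w ∈ R := Submodule.coe_mem _
  set u : V := v - w with hu
  have huR : u ∈ Rᗮ := Submodule.sub_starProjection_mem_orthogonal (K := R) v
  have hadju : LinearMap.adjoint dm u = 0 := by
    have h1 : (⟪LinearMap.adjoint dm u, LinearMap.adjoint dm u⟫ : ℝ) = 0 := by
      rw [LinearMap.adjoint_inner_left, real_inner_comm]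
      exact (Submodule.mem_orthogonal R u).mp huR _ ⟨_, rfl⟩
    exact inner_self_eq_zero.mp h1
  obtain ⟨p0, hp0⟩ := hwR
  have hdw : d w = 0 := by
    rw [← hp0, ← LinearMap.comp_apply, hcomplex₂, LinearMap.zero_apply]
  have hdu : d u = d v := by rw [hu, map_sub, hdw, sub_zero]
  set K : Submodule ℝ Q := LinearMap.ker dm with hK
  set p : Q := p0 - (K.orthogonalProjectionOnto p0 : Q) with hp
  have hpK : p ∈ Kᗮ := Submodule.sub_starProjection_mem_orthogonal (K := K) p0
  have hdmp : dm p = w := by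
    have hker : dm ((K.orthogonalProjectionOnto p0 : Q)) = 0 :=
      LinearMap.mem_ker.mp (Submodule.coe_mem _)
    rw [hp, map_sub, hker, sub_zero, hp0]
  have hadjmm : LinearMap.adjoint dmm p = 0 := by
    have h1 : (⟪LinearMap.adjoint dmm p, LinearMap.adjoint dmm p⟫ : ℝ) = 0 := by
      rw [LinearMap.adjoint_inner_left, real_inner_comm]
      refine (Submodule.mem_orthogonal K p).mp hpK _ ?_
      rw [hK, LinearMap.mem_ker, ← LinearMap.comp_apply, hcomplex₁, LinearMap.zero_apply]
    exact inner_self_eq_zero.mp h1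
  have hPp : ‖p‖ ^ 2 ≤ cPkm * ‖w‖ ^ 2 := by
    have := hPoincareQ p hadjmm
    rwa [hdmp] at this
  have hu2 : ‖u‖ ^ 2 ≤ cPk * ‖d v‖ ^ 2 := by
    have := hPoincareV u hadju
    rwa [hdu] at this
  have hwu : (⟪w, u⟫ : ℝ) = 0 :=
    (Submodule.mem_orthogonal R u).mp huR _ ⟨p0, hp0⟩
  have hvwu : v = w + u := by rw [hu]; abel
  have hpyth : ‖v‖ ^ 2 = ‖w‖ ^ 2 + ‖u‖ ^ 2 := by
    rw [hvwu, norm_add_sq_real, hwu]; ring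
  -- key inner products
  have hSrp : (⟪S r, p⟫ : ℝ) = ‖w‖ ^ 2 := by
    rw [hrS, LinearMap.adjoint_inner_left, hdmp, hvwu, inner_add_left,
      real_inner_self_eq_norm_sq, real_inner_comm w u, hwu, add_zero]
  have hSpr : (⟪S p, r⟫ : ℝ) = ‖w‖ ^ 2 := by
    rw [hSsym, real_inner_comm, hSrp]
  have hSpp : (⟪S p, p⟫ : ℝ) = α * ‖p‖ ^ 2 + (1 + α) * ‖w‖ ^ 2 := by
    rw [hSqq, hdmp]
  clear_value p u w
  clear hRdef hw hu hK hp hexact hp0 hpK huR hadju hadjmm hdw hdu hwu hvwu hSsym hSinj hSsurj hNdmr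
  set c : ℝ := (α * cPkm + 1 + α)⁻¹ with hc
  clear_value c
  have hden : 0 < α * cPkm + 1 + α := by positivity
  have hcpos : 0 < c := hc ▸ inv_pos.mpr hden
  have hkey : 0 ≤ ⟪S (r - c • p), r - c • p⟫ := by
    rw [hSqq]
    nlinarith [sq_nonneg ‖r - c • p‖, sq_nonneg ‖dm (r - c • p)‖]
  have hexpand : (⟪S (r - c • p), r - c • p⟫ : ℝ)
      = N - 2 * c * ‖w‖ ^ 2 + c ^ 2 * (α * ‖p‖ ^ 2 + (1 + α) * ‖w‖ ^ 2) := by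
    rw [map_sub, map_smul, inner_sub_left, inner_sub_right, inner_sub_right,
      real_inner_smul_left, real_inner_smul_left, real_inner_smul_right,
      real_inner_smul_right, hSrr, hSrp, hSpr, hSpp]
    ring
  have hNw : c * ‖w‖ ^ 2 ≤ N := by
    rw [hexpand] at hkey
    have hc2 : c ^ 2 * (α * ‖p‖ ^ 2 + (1 + α) * ‖w‖ ^ 2)
        ≤ c ^ 2 * ((α * cPkm + 1 + α) * ‖w‖ ^ 2) := by
      have h6 : α * ‖p‖ ^ 2 + (1 + α) * ‖w‖ ^ 2 ≤ (α * cPkm + 1 + α) * ‖w‖ ^ 2 := by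
        nlinarith
      nlinarith [sq_nonneg c]
    have hcc : c ^ 2 * ((α * cPkm + 1 + α) * ‖w‖ ^ 2) = c * ‖w‖ ^ 2 := by
      rw [hc]; field_simp
    nlinarith
  have hwN : ‖w‖ ^ 2 ≤ (α * cPkm + 1 + α) * N := by
    have h7 := mul_le_mul_of_nonneg_left hNw (le_of_lt hden)
    rw [hc] at h7
    calc ‖w‖ ^ 2 = (α * cPkm + 1 + α) * ((α * cPkm + 1 + α)⁻¹ * ‖w‖ ^ 2) := by
          field_simp
      _ ≤ (α * cPkm + 1 + α) * N := h7
  have hone : (0:ℝ) < 1 + α := by linarith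
  have hwN2 : (1 + α)⁻¹ * ‖w‖ ^ 2 ≤ (1 + cPkm) * N := by
    have h5 : ‖w‖ ^ 2 ≤ (1 + α) * ((1 + cPkm) * N) := by
      nlinarith [hwN, hNnonneg]
    calc (1 + α)⁻¹ * ‖w‖ ^ 2 ≤ (1 + α)⁻¹ * ((1 + α) * ((1 + cPkm) * N)) :=
          mul_le_mul_of_nonneg_left h5 (by positivity)
      _ = (1 + cPkm) * N := by field_simp
  have hinvpos : (0:ℝ) < (1 + α)⁻¹ := by positivity
  have hinv1 : (1 + α)⁻¹ ≤ 1 := by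
    rw [inv_le_one_iff₀]; right; linarith
  have hfit : fittedVnormSq dm d α v = ‖d v‖ ^ 2 + N := by
    unfold fittedVnormSq
    rw [← hS, hinvr, hNeq]
  constructor
  · rw [hfit]
    clear hfit hinvr
    have hM1 : cPk ≤ max cPk cPkm := le_max_left _ _
    have hM2 : cPkm ≤ max cPk cPkm := le_max_right _ _
    have hterm : (1 + α)⁻¹ * ‖u‖ ^ 2 ≤ cPk * ‖d v‖ ^ 2 := by
      nlinarith [sq_nonneg ‖u‖]
    rw [hpyth]
    nlinarith [sq_nonneg ‖d v‖, hNnonneg, hwN2]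
  · rw [hfit]
    clear hfit hinvr
    linarith [hupper]
end

section
/- Let Q₋, Q, V be finite-dimensional real inner product spaces, d₋₋ : Q₋ → Q and d₋ : Q → V linear maps with d₋ ∘ d₋₋ = 0, and suppose c^P > 0 satisfies ‖q‖² ≤ c^P·‖d₋ q‖² for all q ∈ Q with d₋₋† q = 0. Let Π : V → V be the orthogonal projection onto range d₋. Then for every α > 0 and every v ∈ V, with S = α·id_Q + (1+α)·(d₋† ∘ d₋): ⟨S⁻¹(d₋† v), d₋† v⟩ ≥ (c^P + 1)⁻¹ (1+α)⁻¹ ‖Π v‖². -/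
open scoped RealInnerProductSpace

/-- **Lower bound of the fitted seminorm by the projected component:** under the
Poincaré inequality at level `Q`, for every `α > 0` and every `v ∈ V`,
`⟪S⁻¹(d₋† v), d₋† v⟫ ≥ (c^P+1)⁻¹ (1+α)⁻¹ ‖Π v‖²`, where `Π` is the orthogonal
projection onto `range d₋`. (For `α > 0` the operator `S` is bijective, so
`Function.invFun` is its genuine inverse.) -/
theorem fitted_seminorm_lower_bound
    {Qm Q V : Type*}
    [NormedAddCommGroup Qm] [InnerProductSpace ℝ Qm] [FiniteDimensional ℝ Qm]
    [NormedAddCommGroup Q] [InnerProductSpace ℝ Q] [FiniteDimensional ℝ Q]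
    [NormedAddCommGroup V] [InnerProductSpace ℝ V] [FiniteDimensional ℝ V]
    (dmm : Qm →ₗ[ℝ] Q) (dm : Q →ₗ[ℝ] V)
    (hcomplex : dm ∘ₗ dmm = 0)
    (cP : ℝ) (hcP : 0 < cP)
    (hPoincare : ∀ q : Q, LinearMap.adjoint dmm q = 0 → ‖q‖ ^ 2 ≤ cP * ‖dm q‖ ^ 2)
    (α : ℝ) (hα : 0 < α) :
    ∀ v : V,
      ⟪Function.invFun (fittingOp dm α) (LinearMap.adjoint dm v), LinearMap.adjoint dm v⟫ ≥
        (cP + 1)⁻¹ * (1 + α)⁻¹ * ‖(Submodule.orthogonalProjectionOnto (LinearMap.range dm) v : V)‖ ^ 2 := by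
  intro v
  set S := fittingOp dm α with hSdef
  have hB : ∀ x y : Q, ⟪S x, y⟫ = α * ⟪x, y⟫ + (1 + α) * ⟪dm x, dm y⟫ := by
    intro x y
    simp [hSdef, fittingOp, inner_add_left, real_inner_smul_left,
      LinearMap.adjoint_inner_left]
  have hpos : ∀ x : Q, 0 ≤ ⟪S x, x⟫ := by
    intro x
    rw [hB]
    have h1 := real_inner_self_nonneg (x := x)
    have h2 := real_inner_self_nonneg (x := dm x)
    nlinarith
  have hinj : Function.Injective S := by
    rw [← LinearMap.ker_eq_bot]
    ext x
    simp only [LinearMap.mem_ker, Submodule.mem_bot]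
    constructor
    · intro hx
      have h0 : (0 : ℝ) = α * ⟪x, x⟫ + (1 + α) * ⟪dm x, dm x⟫ := by
        rw [← hB, hx, inner_zero_left]
      have h1 := real_inner_self_nonneg (x := x)
      have h2 := real_inner_self_nonneg (x := dm x)
      have h3 : ⟪x, x⟫ = 0 := by nlinarith
      exact inner_self_eq_zero.mp h3
    · rintro rfl; simp
  have hsurj : Function.Surjective S := (LinearMap.injective_iff_surjective).mp hinj
  set w : Q := LinearMap.adjoint dm v with hw
  set u : Q := Function.invFun S w with hu
  have hSu : S u = w := Function.rightInverse_invFun hsurj w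
  set Pv : V := (Submodule.orthogonalProjectionOnto (LinearMap.range dm) v : V) with hPv
  obtain ⟨q0, hq0⟩ : Pv ∈ LinearMap.range dm :=
    (Submodule.orthogonalProjectionOnto (LinearMap.range dm) v).2
  set p : Q := q0 - (Submodule.orthogonalProjectionOnto (LinearMap.range dmm) q0 : Q) with hp
  have hdp : dm p = Pv := by
    obtain ⟨x, hx⟩ : ((Submodule.orthogonalProjectionOnto (LinearMap.range dmm) q0 : Q)) ∈
        LinearMap.range dmm := (Submodule.orthogonalProjectionOnto (LinearMap.range dmm) q0).2
    have hz : dm ((Submodule.orthogonalProjectionOnto (LinearMap.range dmm) q0 : Q)) = 0 := by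
      rw [← hx]
      have := LinearMap.congr_fun hcomplex x
      simpa using this
    simp only [hp, map_sub, hz, hq0, sub_zero]
  have hporth : p ∈ (LinearMap.range dmm)ᗮ :=
    by have := Submodule.sub_starProjection_mem_orthogonal (K := LinearMap.range dmm) q0; rwa [Submodule.starProjection_apply] at this
  have hker : LinearMap.adjoint dmm p = 0 := by
    have h0 : ⟪LinearMap.adjoint dmm p, LinearMap.adjoint dmm p⟫ = 0 := by
      rw [LinearMap.adjoint_inner_left]
      have hm : dmm (LinearMap.adjoint dmm p) ∈ LinearMap.range dmm :=
        LinearMap.mem_range_self _ _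
      have := (Submodule.mem_orthogonal _ p).mp hporth _ hm
      rw [real_inner_comm]; exact this
    exact inner_self_eq_zero.mp h0
  have hN : ⟪w, p⟫ = ‖Pv‖ ^ 2 := by
    rw [hw, LinearMap.adjoint_inner_left, hdp]
    have horth : v - Pv ∈ (LinearMap.range dm)ᗮ :=
      by have := Submodule.sub_starProjection_mem_orthogonal (K := LinearMap.range dm) v; rwa [Submodule.starProjection_apply] at this
    have hPvm : Pv ∈ LinearMap.range dm := ⟨q0, hq0⟩
    have h0 : ⟪Pv, v - Pv⟫ = 0 := (Submodule.mem_orthogonal _ _).mp horth _ hPvm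
    have h0' : ⟪v - Pv, Pv⟫ = 0 := by rw [real_inner_comm]; exact h0
    have hsub : ⟪v - Pv, Pv⟫ = ⟪v, Pv⟫ - ⟪Pv, Pv⟫ := inner_sub_left v Pv Pv
    have : ⟪v, Pv⟫ = ⟪Pv, Pv⟫ := by linarith
    rw [this, real_inner_self_eq_norm_sq]
  have hPoin : ‖p‖ ^ 2 ≤ cP * ‖Pv‖ ^ 2 := by
    have := hPoincare p hker
    rwa [hdp] at this
  -- abbreviations
  set N : ℝ := ‖Pv‖ ^ 2 with hNdef
  have hNnn : 0 ≤ N := by positivity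
  set t : ℝ := ((cP + 1) * (1 + α))⁻¹ with ht
  have htpos : 0 < t := by
    rw [ht]; positivity
  have hSpp : ⟪S p, p⟫ ≤ (cP + 1) * (1 + α) * N := by
    rw [hB]
    rw [real_inner_self_eq_norm_sq, real_inner_self_eq_norm_sq, hdp]
    nlinarith
  have hSym : ⟪S p, u⟫ = ⟪S u, p⟫ := by
    rw [hB, hB, real_inner_comm p u, real_inner_comm (dm p) (dm u)]
  have hexp : ⟪S (u - t • p), u - t • p⟫ =
      ⟪S u, u⟫ - 2 * t * ⟪S u, p⟫ + t * t * ⟪S p, p⟫ := by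
    rw [map_sub, map_smul, inner_sub_left, inner_sub_right, inner_sub_right,
      real_inner_smul_left, real_inner_smul_left, real_inner_smul_right,
      real_inner_smul_right, hSym]
    ring
  have h0 := hpos (u - t • p)
  rw [hexp, hSu] at h0
  have hwp : ⟪w, p⟫ = N := hN
  have hSppw : ⟪S p, p⟫ ≤ (cP + 1) * (1 + α) * N := hSpp
  have hgoal : ⟪w, u⟫ ≥ (cP + 1)⁻¹ * (1 + α)⁻¹ * N := by
    have hkey : t * ((cP + 1) * (1 + α)) = 1 := by
      rw [ht]; field_simp
    have ht2 : t * t * ⟪S p, p⟫ ≤ t * t * ((cP + 1) * (1 + α) * N) := by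
      apply mul_le_mul_of_nonneg_left hSppw; positivity
    have hinv : (cP + 1)⁻¹ * (1 + α)⁻¹ = t := by
      rw [ht, mul_inv]
    rw [hinv]
    have h3 : t * t * ((cP + 1) * (1 + α) * N) = t * N := by
      calc t * t * ((cP + 1) * (1 + α) * N) = (t * ((cP + 1) * (1 + α))) * (t * N) := by ring
        _ = 1 * (t * N) := by rw [hkey]
        _ = t * N := one_mul _
    have h4 : 2 * t * ⟪w, p⟫ = 2 * t * N := by rw [hwp]
    linarith
  calc ⟪u, w⟫ = ⟪w, u⟫ := real_inner_comm w u
    _ ≥ (cP + 1)⁻¹ * (1 + α)⁻¹ * N := hgoal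
end

section
/- Let Q and V be finite-dimensional real inner product spaces, d₋ : Q → V a linear map, and suppose c^P > 0 satisfies ‖q‖² ≤ c^P·‖d₋ q‖² for all q ∈ Q orthogonal to ker d₋. Let Π : V → V be the orthogonal projection onto range d₋ and let α > 0. Define ‖q‖_Q² = α‖q‖² + (1+α)‖d₋ q‖². Then for every v ∈ V with Π v ≠ 0 there exists q ∈ Q with q ≠ 0 such that ⟨v, d₋ q⟩ ≥ (c^P + 1)^{−1/2}·(1+α)^{−1/2}·‖Π v‖·‖q‖_Q; that is, sup_{q≠0} ⟨v, d₋ q⟩/‖q‖_Q ≥ (c^P + 1)^{−1/2}·|v|_V with |v|_V = (1+α)^{−1/2}‖Π v‖, uniformly in α. -/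
open scoped RealInnerProductSpace

/-- **Flipped inf-sup condition, uniformly in `α`:** under the Poincaré inequality for
`q ⊥ ker d₋`, for every `v` with `Π v ≠ 0` there is `q ≠ 0` with
`⟪v, d₋ q⟫ ≥ (c^P+1)^{-1/2} (1+α)^{-1/2} ‖Π v‖ ‖q‖_Q`, where
`‖q‖_Q² = α‖q‖² + (1+α)‖d₋ q‖²` and `Π` is the orthogonal projection onto `range d₋`. -/
theorem flipped_b_infsup
    {Q V : Type*}
    [NormedAddCommGroup Q] [InnerProductSpace ℝ Q] [FiniteDimensional ℝ Q]
    [NormedAddCommGroup V] [InnerProductSpace ℝ V] [FiniteDimensional ℝ V]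
    (dm : Q →ₗ[ℝ] V)
    (cP : ℝ) (hcP : 0 < cP)
    (hPoincare : ∀ q : Q, q ∈ (LinearMap.ker dm)ᗮ → ‖q‖ ^ 2 ≤ cP * ‖dm q‖ ^ 2)
    (α : ℝ) (hα : 0 < α) :
    ∀ v : V, ((LinearMap.range dm).orthogonalProjectionOnto v : V) ≠ 0 →
      ∃ q : Q, q ≠ 0 ∧
        ⟪v, dm q⟫ ≥ (Real.sqrt (cP + 1))⁻¹ * (Real.sqrt (1 + α))⁻¹ *
          ‖((LinearMap.range dm).orthogonalProjectionOnto v : V)‖ *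
          Real.sqrt (α * ‖q‖ ^ 2 + (1 + α) * ‖dm q‖ ^ 2) := by
  intro v hv
  set P : V := ((LinearMap.range dm).orthogonalProjectionOnto v : V) with hP
  obtain ⟨q₀, hq₀⟩ : P ∈ LinearMap.range dm := ((LinearMap.range dm).orthogonalProjectionOnto v).2
  set K := LinearMap.ker dm
  set q : Q := q₀ - (K.orthogonalProjectionOnto q₀ : Q) with hq
  have hqperp : q ∈ Kᗮ := by
    have h := K.sub_starProjection_mem_orthogonal q₀
    rwa [Submodule.starProjection_apply] at h
  have hdmq : dm q = P := by
    have : dm ((K.orthogonalProjectionOnto q₀ : Q)) = 0 :=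
      (K.orthogonalProjectionOnto q₀).2
    rw [hq, map_sub, this, hq₀, sub_zero]
  have hqne : q ≠ 0 := by
    intro h
    apply hv
    rw [← hdmq, h, map_zero]
  refine ⟨q, hqne, ?_⟩
  have hinner : ⟪v, dm q⟫ = ‖P‖ ^ 2 := by
    rw [hdmq, hP]
    have := Submodule.inner_orthogonalProjectionOnto_eq_of_mem_left (𝕜 := ℝ)
      (K := LinearMap.range dm) ((LinearMap.range dm).orthogonalProjectionOnto v) v
    rw [real_inner_comm, ← this, Submodule.coe_inner, real_inner_self_eq_norm_sq]
  rw [hinner]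
  have hPpos : 0 < ‖P‖ := norm_pos_iff.mpr hv
  have hpoin : ‖q‖ ^ 2 ≤ cP * ‖P‖ ^ 2 := by
    have := hPoincare q hqperp
    rwa [hdmq] at this
  have hbound : α * ‖q‖ ^ 2 + (1 + α) * ‖dm q‖ ^ 2 ≤ (cP + 1) * (1 + α) * ‖P‖ ^ 2 := by
    rw [hdmq]
    nlinarith [sq_nonneg ‖q‖, sq_nonneg ‖P‖]
  have hs : Real.sqrt (α * ‖q‖ ^ 2 + (1 + α) * ‖dm q‖ ^ 2) ≤
      Real.sqrt (cP + 1) * Real.sqrt (1 + α) * ‖P‖ := by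
    calc Real.sqrt (α * ‖q‖ ^ 2 + (1 + α) * ‖dm q‖ ^ 2)
        ≤ Real.sqrt ((cP + 1) * (1 + α) * ‖P‖ ^ 2) := Real.sqrt_le_sqrt hbound
      _ = Real.sqrt (cP + 1) * Real.sqrt (1 + α) * ‖P‖ := by
          rw [Real.sqrt_mul (by positivity), Real.sqrt_mul (by positivity),
            Real.sqrt_sq (norm_nonneg _)]
  have hc1 : 0 < Real.sqrt (cP + 1) := Real.sqrt_pos.mpr (by linarith)
  have hc2 : 0 < Real.sqrt (1 + α) := Real.sqrt_pos.mpr (by linarith)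
  rw [ge_iff_le]
  calc (Real.sqrt (cP + 1))⁻¹ * (Real.sqrt (1 + α))⁻¹ * ‖P‖ *
        Real.sqrt (α * ‖q‖ ^ 2 + (1 + α) * ‖dm q‖ ^ 2)
      ≤ (Real.sqrt (cP + 1))⁻¹ * (Real.sqrt (1 + α))⁻¹ * ‖P‖ *
        (Real.sqrt (cP + 1) * Real.sqrt (1 + α) * ‖P‖) := by
        apply mul_le_mul_of_nonneg_left hs
        positivity
    _ = ‖P‖ ^ 2 := by field_simp
end

section
/- Let Q, V, W be finite-dimensional real inner product spaces, d₋ : Q → V and d : V → W linear maps with d ∘ d₋ = 0 and range d₋ = ker d (exactness at V), and suppose c^P > 0 satisfies ‖u‖² ≤ c^P·‖d u‖² for all u ∈ V with d₋† u = 0. Let Π : V → V be the orthogonal projection onto range d₋. Then for every α > 0 and every v ∈ V: min{1/2, (2c^P)⁻¹}·((1+α)⁻¹‖v‖² + ‖d v‖²) ≤ (1+α)⁻¹‖Π v‖² + ‖d v‖² ≤ (1+α)⁻¹‖v‖² + ‖d v‖². In particular the two norms are equivalent uniformly in α. -/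
open scoped RealInnerProductSpace

lemma flipped_aux (m a cP A B D : ℝ) (hA : 0 ≤ A) (hB : 0 ≤ B) (hD : 0 ≤ D)
    (ha : 0 < a) (ha1 : a ≤ 1) (hm : 0 < m) (hm1 : m ≤ 1/2) (hm2 : m * cP ≤ 1/2)
    (hBD : B ≤ cP * D) : m * (a * (A + B) + D) ≤ a * A + D := by
  have h1 : m * a * A ≤ a * A := by
    nlinarith [mul_nonneg (mul_nonneg ha.le hA) (by linarith : (0:ℝ) ≤ 1 - m)]
  have h2 : m * a * B ≤ m * B := by
    nlinarith [mul_nonneg (mul_nonneg hm.le hB) (by linarith : (0:ℝ) ≤ 1 - a)]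
  have h3 : m * B ≤ m * (cP * D) := by nlinarith
  have h4 : m * (cP * D) ≤ (1/2) * D := by nlinarith
  nlinarith

/-- **Uniform norm equivalence for the flipped fitted `V`-norm:** for an exact complex
with Poincaré constant `c^P` at level `V`, for all `α > 0` and `v ∈ V`,
`min{1/2, (2c^P)⁻¹}((1+α)⁻¹‖v‖² + ‖dv‖²) ≤ (1+α)⁻¹‖Π v‖² + ‖dv‖² ≤ (1+α)⁻¹‖v‖² + ‖dv‖²`,
where `Π` is the orthogonal projection onto `range d₋`. -/
theorem flipped_Vnorm_equivalence
    {Q V W : Type*}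
    [NormedAddCommGroup Q] [InnerProductSpace ℝ Q] [FiniteDimensional ℝ Q]
    [NormedAddCommGroup V] [InnerProductSpace ℝ V] [FiniteDimensional ℝ V]
    [NormedAddCommGroup W] [InnerProductSpace ℝ W] [FiniteDimensional ℝ W]
    (dm : Q →ₗ[ℝ] V) (d : V →ₗ[ℝ] W)
    (hcomplex : d ∘ₗ dm = 0)
    (hexact : LinearMap.range dm = LinearMap.ker d)
    (cP : ℝ) (hcP : 0 < cP)
    (hPoincare : ∀ u : V, LinearMap.adjoint dm u = 0 → ‖u‖ ^ 2 ≤ cP * ‖d u‖ ^ 2) :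
    ∀ α : ℝ, 0 < α → ∀ v : V,
      min (1 / 2) (2 * cP)⁻¹ * ((1 + α)⁻¹ * ‖v‖ ^ 2 + ‖d v‖ ^ 2) ≤
        (1 + α)⁻¹ * ‖(Submodule.orthogonalProjection (LinearMap.range dm) v : V)‖ ^ 2 + ‖d v‖ ^ 2 ∧
      (1 + α)⁻¹ * ‖(Submodule.orthogonalProjection (LinearMap.range dm) v : V)‖ ^ 2 + ‖d v‖ ^ 2 ≤
        (1 + α)⁻¹ * ‖v‖ ^ 2 + ‖d v‖ ^ 2 := by

  intro α hα v
  set K := LinearMap.range dm with hK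
  set p : V := (Submodule.orthogonalProjection K v : V) with hp
  set w : V := v - p with hwdef
  have hpK : p ∈ K := (Submodule.orthogonalProjection K v).2
  have hw : w ∈ Kᗮ := K.sub_starProjection_mem_orthogonal v
  have hdp : d p = 0 := by
    have : p ∈ LinearMap.ker d := hexact ▸ hpK
    exact this
  have hvpw : v = p + w := by simp [hwdef]
  have hdv : d v = d w := by rw [hvpw, map_add, hdp, zero_add]
  have hadj : LinearMap.adjoint dm w = 0 := by
    rw [← inner_self_eq_zero (𝕜 := ℝ), LinearMap.adjoint_inner_left]
    exact ((Submodule.mem_orthogonal' K w).mp hw) _ ⟨_, rfl⟩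
  have hP : ‖w‖ ^ 2 ≤ cP * ‖d v‖ ^ 2 := by
    rw [hdv]; exact hPoincare w hadj
  have h0 : (inner ℝ p w : ℝ) = 0 := (Submodule.mem_orthogonal K w).mp hw p hpK
  have hpyth : ‖v‖ ^ 2 = ‖p‖ ^ 2 + ‖w‖ ^ 2 := by
    rw [hvpw, norm_add_sq_real, h0]; ring
  have ha1 : (0:ℝ) < 1 + α := by linarith
  have ha : (1 + α)⁻¹ ≤ 1 := by
    rw [inv_le_one_iff₀]; right; linarith
  have hapos : (0:ℝ) < (1 + α)⁻¹ := inv_pos.mpr ha1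
  have hm1 : min (1/2) (2*cP)⁻¹ ≤ 1/2 := min_le_left _ _
  have hm2 : min (1/2) (2*cP)⁻¹ * cP ≤ 1/2 := by
    have h := min_le_right (1/2 : ℝ) (2*cP)⁻¹
    have : (2*cP)⁻¹ * cP = 1/2 := by field_simp
    nlinarith
  have hmpos : 0 < min (1/2 : ℝ) (2*cP)⁻¹ := by
    apply lt_min (by norm_num)
    exact inv_pos.mpr (by linarith)
  have hnp : (0:ℝ) ≤ ‖p‖ ^ 2 := by positivity
  have hnd : (0:ℝ) ≤ ‖d v‖ ^ 2 := by positivity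
  have hnw : (0:ℝ) ≤ ‖w‖ ^ 2 := by positivity
  constructor
  · have := flipped_aux (min (1/2) (2*cP)⁻¹) ((1+α)⁻¹) cP (‖p‖^2) (‖w‖^2) (‖d v‖^2)
      hnp hnw hnd hapos ha hmpos hm1 hm2 hP
    rw [hpyth]; linarith
  · rw [hpyth]
    have h5 : (0:ℝ) ≤ (1+α)⁻¹ * ‖w‖^2 := by positivity
    have h6 : (1+α)⁻¹ * (‖p‖^2 + ‖w‖^2) = (1+α)⁻¹ * ‖p‖^2 + (1+α)⁻¹ * ‖w‖^2 := by ring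
    linarith
end

section
/- Let Q, V, W be finite-dimensional real inner product spaces, d₋ : Q → V and d : V → W linear maps with d ∘ d₋ = 0 and range d₋ = ker d (exactness at V), and let α > 0. Then for every f ∈ V and g ∈ Q there exists a unique pair (p, u) ∈ Q × V such that α⟨p, q⟩ − ⟨u, d₋ q⟩ = ⟨g, q⟩ for all q ∈ Q and ⟨d₋ p, v⟩ + ⟨d u, d v⟩ = ⟨f, v⟩ for all v ∈ V. (Well-posedness of the mixed formulation of the Hodge Laplace problem.) -/
open scoped RealInnerProductSpace

/-- **Well-posedness of the mixed formulation of the Hodge Laplace problem:** for an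
exact complex and `α > 0`, for every `f ∈ V` and `g ∈ Q` there is a unique pair
`(p, u) ∈ Q × V` with `α⟪p, q⟫ − ⟪u, d₋ q⟫ = ⟪g, q⟫` for all `q ∈ Q` and
`⟪d₋ p, v⟫ + ⟪d u, d v⟫ = ⟪f, v⟫` for all `v ∈ V`. -/
theorem mixed_hodge_laplace_wellposed
    {Q V W : Type*}
    [NormedAddCommGroup Q] [InnerProductSpace ℝ Q] [FiniteDimensional ℝ Q]
    [NormedAddCommGroup V] [InnerProductSpace ℝ V] [FiniteDimensional ℝ V]
    [NormedAddCommGroup W] [InnerProductSpace ℝ W] [FiniteDimensional ℝ W]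
    (dm : Q →ₗ[ℝ] V) (d : V →ₗ[ℝ] W)
    (hcomplex : d ∘ₗ dm = 0)
    (hexact : LinearMap.range dm = LinearMap.ker d)
    (α : ℝ) (hα : 0 < α) :
    ∀ (f : V) (g : Q), ∃! pu : Q × V,
      (∀ q : Q, α * ⟪pu.1, q⟫ - ⟪pu.2, dm q⟫ = ⟪g, q⟫) ∧
      (∀ v : V, ⟪dm pu.1, v⟫ + ⟪d pu.2, d v⟫ = ⟪f, v⟫) := by
  intro f g
  set dm' := LinearMap.adjoint dm with hdm'
  set d' := LinearMap.adjoint d with hd'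
  set T : (Q × V) →ₗ[ℝ] (Q × V) :=
    LinearMap.prod
      (α • (LinearMap.fst ℝ Q V) - dm' ∘ₗ LinearMap.snd ℝ Q V)
      (dm ∘ₗ LinearMap.fst ℝ Q V + (d' ∘ₗ d) ∘ₗ LinearMap.snd ℝ Q V) with hTdef
  have hT : ∀ pu : Q × V, T pu = (α • pu.1 - dm' pu.2, dm pu.1 + d' (d pu.2)) :=
    fun _ => rfl
  -- The system is equivalent to T pu = (g, f)
  have hequiv : ∀ pu : Q × V,
      ((∀ q : Q, α * ⟪pu.1, q⟫ - ⟪pu.2, dm q⟫ = ⟪g, q⟫) ∧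
       (∀ v : V, ⟪dm pu.1, v⟫ + ⟪d pu.2, d v⟫ = ⟪f, v⟫)) ↔ T pu = (g, f) := by
    rintro ⟨p, u⟩
    rw [hT, Prod.mk.injEq]
    constructor
    · rintro ⟨h1, h2⟩
      constructor
      · apply ext_inner_right ℝ
        intro q
        rw [inner_sub_left, real_inner_smul_left, LinearMap.adjoint_inner_left]
        exact h1 q
      · apply ext_inner_right ℝ
        intro v
        rw [inner_add_left, LinearMap.adjoint_inner_left]
        exact h2 v
    · rintro ⟨h1, h2⟩
      constructor
      · intro q
        have := congrArg (fun x => ⟪x, q⟫) h1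
        simpa [inner_sub_left, real_inner_smul_left, hdm', LinearMap.adjoint_inner_left] using this
      · intro v
        have := congrArg (fun x => ⟪x, v⟫) h2
        simpa [inner_add_left, hd', LinearMap.adjoint_inner_left] using this
  -- T is injective
  have hinj : Function.Injective T := by
    rw [← LinearMap.ker_eq_bot, LinearMap.ker_eq_bot']
    rintro ⟨p, u⟩ hpu
    rw [hT] at hpu
    have h1 : α • p - dm' u = 0 := congrArg Prod.fst hpu
    have h2 : dm p + d' (d u) = 0 := congrArg Prod.snd hpu
    have h1' : dm' u = α • p := by
      rw [sub_eq_zero] at h1; exact h1.symm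
    have key : α * ⟪p, p⟫ + ⟪d u, d u⟫ = 0 := by
      have := congrArg (fun x => ⟪x, u⟫) h2
      simp only [inner_add_left, hd', LinearMap.adjoint_inner_left, inner_zero_left] at this
      have hdmp : ⟪dm p, u⟫ = α * ⟪p, p⟫ := by
        rw [← LinearMap.adjoint_inner_right, ← hdm', h1', real_inner_smul_right]
      rw [hdmp] at this
      exact this
    have hn1 : (0:ℝ) ≤ ⟪p, p⟫ := real_inner_self_nonneg
    have hn2 : (0:ℝ) ≤ ⟪d u, d u⟫ := real_inner_self_nonneg
    have hn3 : (0:ℝ) ≤ α * ⟪p, p⟫ := mul_nonneg hα.le hn1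
    have hp0 : ⟪p, p⟫ = 0 := by
      have : α * ⟪p, p⟫ = 0 := by linarith
      exact (mul_eq_zero.mp this).resolve_left (ne_of_gt hα)
    have hdu0 : ⟪d u, d u⟫ = 0 := by linarith
    have hp : p = 0 := by
      rwa [inner_self_eq_zero] at hp0
    have hdu : d u = 0 := by
      rwa [inner_self_eq_zero] at hdu0
    have hu : u ∈ LinearMap.range dm := by
      rw [hexact]; exact hdu
    obtain ⟨q, hq⟩ := hu
    have hu0 : u = 0 := by
      rw [← inner_self_eq_zero (𝕜 := ℝ) (x := u)]
      calc ⟪u, u⟫ = ⟪dm q, u⟫ := by rw [hq]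
        _ = ⟪q, dm' u⟫ := by rw [hdm', LinearMap.adjoint_inner_right]
        _ = 0 := by rw [h1', hp]; simp
    rw [hp, hu0]; rfl
  -- T is surjective, hence bijective
  have hsurj : Function.Surjective T :=
    (LinearMap.injective_iff_surjective (f := T)).mp hinj
  obtain ⟨pu, hpu⟩ := hsurj (g, f)
  refine ⟨pu, (hequiv pu).mpr hpu, ?_⟩
  intro pu' hpu'
  exact hinj (((hequiv pu').mp hpu').trans hpu.symm)
end
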